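/- Brouncker's continued fraction for π: 4/π = 1 + 1²/(2 + 3²/(2 + 5²/(2 + ···))); that is, the convergents of the continued fraction with partial numerators (2n−1)² and all partial denominators 2 (after the leading 1) converge to 4/π. -/
import Mathlib

open Finset Filter

/-- Numerators of Brouncker's continued fraction 1 + 1²/(2 + 3²/(2 + 5²/(2 + ⋯))):
`bP (n+1)` is p_n, with p_{-1} = bP 0 = 1, p_0 = bP 1 = 1. -/
def bP : ℕ → ℝ
  | 0 => 1
  | 1 => 1
  | n + 2 => 2 * bP (n + 1) + (2 * ((n : ℝ) + 1) - 1) ^ 2 * bP n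

/-- Denominators: q_{-1} = bQ 0 = 0, q_0 = bQ 1 = 1. -/
def bQ : ℕ → ℝ
  | 0 => 0
  | 1 => 1
  | n + 2 => 2 * bQ (n + 1) + (2 * ((n : ℝ) + 1) - 1) ^ 2 * bQ n

/-- `(2n+1)!!` as a product. -/
noncomputable def bD (n : ℕ) : ℝ := ∏ i ∈ range n, (2 * (i : ℝ) + 3)

/-- Partial Leibniz sums. -/
noncomputable def bL (n : ℕ) : ℝ := ∑ i ∈ range (n + 1), (-1 : ℝ) ^ i / (2 * (i : ℝ) + 1)

lemma bD_pos (n : ℕ) : 0 < bD n := Finset.prod_pos fun i _ => by positivity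

lemma b_key (n : ℕ) :
    (bP (n + 1) = bD n ∧ bQ (n + 1) = bD n * bL n) ∧
      (bP (n + 2) = bD (n + 1) ∧ bQ (n + 2) = bD (n + 1) * bL (n + 1)) := by
  induction n with
  | zero =>
    norm_num [bP, bQ, bD, bL]
  | succ n ih =>
    obtain ⟨⟨hP1, hQ1⟩, hP2, hQ2⟩ := ih
    refine ⟨⟨hP2, hQ2⟩, ?_, ?_⟩
    · show bP (n + 1 + 2) = _
      rw [bP, hP1, hP2]
      simp only [bD, prod_range_succ]
      push_cast
      ring
    · show bQ (n + 1 + 2) = _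
      rw [bQ, hQ1, hQ2]
      simp only [bD, bL, prod_range_succ, sum_range_succ]
      push_cast
      have h1 : (2 * ((n : ℝ) + 1) + 1) ≠ 0 := by positivity
      have h2 : (2 * ((n : ℝ) + 1 + 1) + 1) ≠ 0 := by positivity
      field_simp
      ring

/-- Brouncker's continued fraction: the convergents p_n/q_n tend to 4/π. -/
theorem brouncker_cf :
    Filter.Tendsto (fun n : ℕ => bP (n + 1) / bQ (n + 1)) Filter.atTop
      (nhds (4 / Real.pi)) := by
  have heq : ∀ n : ℕ, bP (n + 1) / bQ (n + 1) = (bL n)⁻¹ := by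
    intro n
    obtain ⟨⟨hP, hQ⟩, -⟩ := b_key n
    rw [hP, hQ, ← mul_one (bD n), mul_assoc,
      mul_div_mul_left _ _ (bD_pos n).ne', one_mul, one_div]
  simp only [heq]
  have hL : Tendsto bL atTop (nhds (Real.pi / 4)) :=
    Real.tendsto_sum_pi_div_four.comp (tendsto_add_atTop_nat 1)
  have := hL.inv₀ (by positivity)
  simpa [one_div, inv_div] using this
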